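/- arXiv:1911.03496 — 3 statements merged into one kernel-verified Lean document; each statement's English description precedes it below -/
import Mathlib

section
/- The matrix R̄(u) has the explicit entrywise form R̄(u) = Σ_{i: i≠i′} e_{ii}⊗e_{ii} + ((u−1)/(qu−q^{-1}))·Σ_{i≠j, i≠j′} e_{ii}⊗e_{jj} + ((q−q^{-1})/(qu−q^{-1}))·Σ_{i>j, i≠j′} e_{ij}⊗e_{ji} + ((q−q^{-1})u/(qu−q^{-1}))·Σ_{i<j, i≠j′} e_{ij}⊗e_{ji} + (1/((u−q^{-2})(u−ξ)))·Σ_{i,j=1}^{N} a_{ij}(u)·e_{i′j′}⊗e_{ij}, where a_{ij}(u) = (q^{-2}u−ξ)(u−1) if i = j and i ≠ i′; a_{ij}(u) = q^{-1}(u−ξ)(u−1) + (ξ−1)(q^{-2}−1)u if i = j = i′; a_{ij}(u) = (q^{-2}−1)(q^{ī−j̄}ξ(u−1) − δ_{i,j′}(u−ξ)) if i < j; and a_{ij}(u) = (q^{-2}−1)u(q^{ī−j̄}(u−1) − δ_{i,j′}(u−ξ)) if i > j (δ denoting the Kronecker delta). -/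
/-!
STATEMENT 9: the explicit entrywise form of the type `B_n` R-matrix `R̄(u)`,
over `ℂ(q^{1/2})(u)`.
-/

open Matrix
open scoped Kronecker

noncomputable section

set_option synthInstance.maxHeartbeats 1000000 in
instance : Field (RatFunc (RatFunc ℂ)) := inferInstance

set_option synthInstance.maxHeartbeats 400000
set_option maxHeartbeats 1000000

/-- The field `ℂ(q^{1/2})(u)`. -/
abbrev K : Type := RatFunc (RatFunc ℂ)

/-- The element `q^{1/2}`. -/
def qh : K := RatFunc.C RatFunc.X
/-- The indeterminate `u`. -/
def uu : K := RatFunc.X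
/-- `q = (q^{1/2})²`. -/
def qq : K := qh ^ 2

/-- Twice the "bar" value: `2·ī` for the index `i` (0-based) in type `B_n`, `N = 2n+1`. -/
def bar2 (n : ℕ) (i : Fin (2 * n + 1)) : ℤ :=
  if (i : ℕ) < n then 2 * (n : ℤ) - 2 * ((i : ℕ) : ℤ) - 1
  else if (i : ℕ) = n then 0
  else 2 * (n : ℤ) - 2 * ((i : ℕ) : ℤ) + 1

/-- Matrix units `e_{ij}`. -/
def EE (n : ℕ) (i j : Fin (2 * n + 1)) : Matrix (Fin (2 * n + 1)) (Fin (2 * n + 1)) K :=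
  Matrix.single i j 1

/-- `P = Σ_{i,j} e_{ij} ⊗ e_{ji}`. -/
def Pm (n : ℕ) :
    Matrix (Fin (2 * n + 1) × Fin (2 * n + 1)) (Fin (2 * n + 1) × Fin (2 * n + 1)) K :=
  ∑ i, ∑ j, EE n i j ⊗ₖ EE n j i

/-- `Q = Σ_{i,j} q^{ī−j̄} e_{i′j′} ⊗ e_{ij}`. -/
def Qm (n : ℕ) :
    Matrix (Fin (2 * n + 1) × Fin (2 * n + 1)) (Fin (2 * n + 1) × Fin (2 * n + 1)) K :=
  ∑ i, ∑ j, qh ^ (bar2 n i - bar2 n j) • (EE n i.rev j.rev ⊗ₖ EE n i j)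

/-- The constant R-matrix `R` of type `B_n`. -/
def Rm (n : ℕ) :
    Matrix (Fin (2 * n + 1) × Fin (2 * n + 1)) (Fin (2 * n + 1) × Fin (2 * n + 1)) K :=
  qq • ∑ i, (if i ≠ i.rev then EE n i i ⊗ₖ EE n i i else 0)
  + EE n ⟨n, by omega⟩ ⟨n, by omega⟩ ⊗ₖ EE n ⟨n, by omega⟩ ⟨n, by omega⟩
  + ∑ i, ∑ j, (if i ≠ j ∧ i ≠ j.rev then EE n i i ⊗ₖ EE n j j else 0)
  + qq⁻¹ • ∑ i, (if i ≠ i.rev then EE n i i ⊗ₖ EE n i.rev i.rev else 0)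
  + (qq - qq⁻¹) • ∑ i, ∑ j, (if i < j then EE n i j ⊗ₖ EE n j i else 0)
  - (qq - qq⁻¹) •
      ∑ i, ∑ j, (if j < i then qh ^ (bar2 n i - bar2 n j) • (EE n i.rev j.rev ⊗ₖ EE n i j)
        else 0)

/-- `ξ = q^{2−N}` with `N = 2n+1`. -/
def xib (n : ℕ) : K := qq ^ ((2 : ℤ) - (2 * (n : ℤ) + 1))

/-- `R̄(w) = ((w−1)/(wq−q^{-1}))R + ((q−q^{-1})/(wq−q^{-1}))P
           − ((q−q^{-1})(w−1)ξ)/((wq−q^{-1})(w−ξ))·Q`. -/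
def Rbar (n : ℕ) (w : K) :
    Matrix (Fin (2 * n + 1) × Fin (2 * n + 1)) (Fin (2 * n + 1) × Fin (2 * n + 1)) K :=
  ((w - 1) / (w * qq - qq⁻¹)) • Rm n
  + ((qq - qq⁻¹) / (w * qq - qq⁻¹)) • Pm n
  - ((qq - qq⁻¹) * (w - 1) * xib n / ((w * qq - qq⁻¹) * (w - xib n))) • Qm n


/-- The entries `a_{ij}(u)` of the lower-right block of `R̄(u)` (type `B`). -/
def aent (n : ℕ) (i j : Fin (2 * n + 1)) : K :=
  if i = j then
    (if i = i.rev then qq⁻¹ * (uu - xib n) * (uu - 1) + (xib n - 1) * (qq ^ (-2 : ℤ) - 1) * uu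
     else (qq ^ (-2 : ℤ) * uu - xib n) * (uu - 1))
  else if i < j then
    (qq ^ (-2 : ℤ) - 1) *
      (qh ^ (bar2 n i - bar2 n j) * xib n * (uu - 1) - (if i = j.rev then uu - xib n else 0))
  else
    (qq ^ (-2 : ℤ) - 1) * uu *
      (qh ^ (bar2 n i - bar2 n j) * (uu - 1) - (if i = j.rev then uu - xib n else 0))

/-!
Both sides are compared entry by entry. Every summand is a multiple of a matrix unit of
`M_N ⊗ M_N`, and each of the families `e_{ii} ⊗ e_{jj}`, `e_{ij} ⊗ e_{ji}`, `e_{i′j′} ⊗ e_{ij}`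
meets a given position at most once, so an entry is a sum of coefficients selected by
conditions on the four indices. These conditions are linear arithmetic on the (0-based) indices,
since `i′ = 2n - i`. Once they are decided, what is left is an identity of rational functions in
`q`, `u`, `ξ` and `q^{ī−j̄}`, valid as soon as `q`, `u − ξ` and `uq² − 1` are nonzero; the last
two hold because `u` is transcendental over `ℂ(q^{1/2})`.
-/

namespace Matrix

variable {ι α : Type*} [Fintype ι] [DecidableEq ι] [Semiring α]

theorem sum_sum_ite_single_swap_apply (P : ι → ι → Prop) [DecidableRel P] (a b c d : ι) :
    (∑ i, ∑ j, if P i j then single (i, j) (j, i) (1 : α) else 0) (a, b) (c, d)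
      = if b = c ∧ a = d ∧ P a b then 1 else 0 := by
  simp only [Matrix.sum_apply, Matrix.single_apply, Matrix.ite_apply, Matrix.zero_apply,
    Prod.mk.injEq]
  rw [Fintype.sum_eq_single a fun i hi => Fintype.sum_eq_zero _ fun j => by simp [hi],
    Fintype.sum_eq_single b fun j hj => by simp [hj]]
  grind

theorem sum_sum_ite_single_diag_apply (P : ι → ι → Prop) [DecidableRel P] (a b c d : ι) :
    (∑ i, ∑ j, if P i j then single (i, j) (i, j) (1 : α) else 0) (a, b) (c, d)
      = if a = c ∧ b = d ∧ P a b then 1 else 0 := by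
  simp only [Matrix.sum_apply, Matrix.single_apply, Matrix.ite_apply, Matrix.zero_apply,
    Prod.mk.injEq]
  rw [Fintype.sum_eq_single a fun i hi => Fintype.sum_eq_zero _ fun j => by simp [hi],
    Fintype.sum_eq_single b fun j hj => by simp [hj]]
  grind

theorem sum_sum_ite_smul_single_apply (σ : ι → ι) (P : ι → ι → Prop) [DecidableRel P]
    (f : ι → ι → α) (a b c d : ι) :
    (∑ i, ∑ j, if P i j then f i j • single (σ i, i) (σ j, j) (1 : α) else 0) (a, b) (c, d)
      = if σ b = a ∧ σ d = c ∧ P b d then f b d else 0 := by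
  simp only [Matrix.sum_apply, Matrix.single_apply, Matrix.ite_apply, Matrix.zero_apply,
    Prod.mk.injEq, Matrix.smul_apply]
  rw [Fintype.sum_eq_single b fun i hi => Fintype.sum_eq_zero _ fun j => by simp [hi],
    Fintype.sum_eq_single d fun j hj => by simp [hj]]
  simp only [smul_eq_mul, mul_ite, mul_one, mul_zero]
  grind

theorem sum_ite_single_apply (σ : ι → ι) (P : ι → Prop) [DecidablePred P] (a b c d : ι) :
    (∑ i, if P i then single (i, σ i) (i, σ i) (1 : α) else 0) (a, b) (c, d)
      = if a = c ∧ σ a = b ∧ σ a = d ∧ P a then 1 else 0 := by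
  simp only [Matrix.sum_apply, Matrix.single_apply, Matrix.ite_apply, Matrix.zero_apply,
    Prod.mk.injEq]
  rw [Fintype.sum_eq_single a fun i hi => by simp [hi]]
  grind

theorem sum_sum_single_swap_apply (a b c d : ι) :
    (∑ i, ∑ j, single (i, j) (j, i) (1 : α)) (a, b) (c, d) = if b = c ∧ a = d then 1 else 0 := by
  simpa using sum_sum_ite_single_swap_apply (α := α) (fun _ _ => True) a b c d

theorem sum_sum_smul_single_apply (σ : ι → ι) (f : ι → ι → α) (a b c d : ι) :
    (∑ i, ∑ j, f i j • single (σ i, i) (σ j, j) (1 : α)) (a, b) (c, d)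
      = if σ b = a ∧ σ d = c then f b d else 0 := by
  simpa using sum_sum_ite_smul_single_apply σ (fun _ _ => True) f a b c d

end Matrix

theorem RatFunc.X_sub_C_ne_zero {F : Type*} [Field F] (s : F) :
    (RatFunc.X : RatFunc F) - RatFunc.C s ≠ 0 := by
  rw [← RatFunc.algebraMap_X, ← RatFunc.algebraMap_C, ← map_sub]
  exact (map_ne_zero_iff _ (RatFunc.algebraMap_injective F)).2 (Polynomial.X_sub_C_ne_zero s)

theorem qq_eq_C : qq = RatFunc.C (RatFunc.X ^ 2 : RatFunc ℂ) := by
  rw [qq, qh, map_pow]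

theorem qq_ne_zero : qq ≠ 0 := by
  rw [qq_eq_C, map_ne_zero_iff _ RatFunc.C_injective]
  exact pow_ne_zero 2 RatFunc.X_ne_zero

theorem uu_sub_qq_zpow_ne_zero (k : ℤ) : uu - qq ^ k ≠ 0 := by
  rw [qq_eq_C, ← map_zpow₀]
  exact RatFunc.X_sub_C_ne_zero _

theorem uu_mul_qq_sq_sub_one_ne_zero : uu * qq ^ 2 - 1 ≠ 0 := by
  have h : uu * qq ^ 2 - 1 = qq ^ 2 * (uu - qq ^ (-2 : ℤ)) := by
    field_simp [qq_ne_zero]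
  rw [h]
  exact mul_ne_zero (pow_ne_zero 2 qq_ne_zero) (uu_sub_qq_zpow_ne_zero _)

theorem statement9_general (n : ℕ) :
    Rbar n uu
      = ∑ i, (if i ≠ i.rev then EE n i i ⊗ₖ EE n i i else 0)
        + ((uu - 1) / (qq * uu - qq⁻¹)) •
            ∑ i, ∑ j, (if i ≠ j ∧ i ≠ j.rev then EE n i i ⊗ₖ EE n j j else 0)
        + ((qq - qq⁻¹) / (qq * uu - qq⁻¹)) •
            ∑ i, ∑ j, (if j < i ∧ i ≠ j.rev then EE n i j ⊗ₖ EE n j i else 0)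
        + ((qq - qq⁻¹) * uu / (qq * uu - qq⁻¹)) •
            ∑ i, ∑ j, (if i < j ∧ i ≠ j.rev then EE n i j ⊗ₖ EE n j i else 0)
        + ((uu - qq ^ (-2 : ℤ)) * (uu - xib n))⁻¹ •
            ∑ i, ∑ j, aent n i j • (EE n i.rev j.rev ⊗ₖ EE n i j) := by
  have hq := qq_ne_zero
  have hx : uu - xib n ≠ 0 := uu_sub_qq_zpow_ne_zero _
  have hu := uu_mul_qq_sq_sub_one_ne_zero
  ext ⟨a, b⟩ ⟨c, d⟩
  simp only [Rbar, Rm, Pm, Qm, aent, EE, single_kronecker_single, mul_one, Matrix.add_apply,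
    Matrix.sub_apply, Matrix.smul_apply, smul_eq_mul, single_apply, Prod.mk.injEq,
    sum_sum_ite_single_swap_apply, sum_sum_single_swap_apply, sum_sum_ite_single_diag_apply,
    sum_sum_ite_smul_single_apply, sum_sum_smul_single_apply, sum_ite_single_apply]
  by_cases hQ : b.rev = a ∧ d.rev = c
  on_goal 1 =>
    obtain ⟨rfl, rfl⟩ := hQ
    -- `b = d` is substituted in `Fin`, so that `q^{b̄−b̄}` reduces to `1`
    by_cases hr : b = d.rev <;> rcases lt_trichotomy b d with h | rfl | h
  on_goal -1 =>
    by_cases hD : a = c ∧ b = d <;> by_cases hS : b = c ∧ a = d <;>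
      rcases lt_trichotomy a b with h | h | h
  all_goals
    simp only [ne_eq, Fin.rev_rev, Fin.ext_iff, Fin.val_rev, Fin.lt_def, sub_self, zpow_zero] at *
    first
      | omega
      | simp (disch := omega) only [if_pos, if_neg, and_self, true_and, and_false,
          not_true_eq_false, if_true, if_false]
        field_simp
        ring

theorem statement9 (n : ℕ) (hn : 1 ≤ n) :
    Rbar n uu
      = ∑ i, (if i ≠ i.rev then EE n i i ⊗ₖ EE n i i else 0)
        + ((uu - 1) / (qq * uu - qq⁻¹)) •
            ∑ i, ∑ j, (if i ≠ j ∧ i ≠ j.rev then EE n i i ⊗ₖ EE n j j else 0)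
        + ((qq - qq⁻¹) / (qq * uu - qq⁻¹)) •
            ∑ i, ∑ j, (if j < i ∧ i ≠ j.rev then EE n i j ⊗ₖ EE n j i else 0)
        + ((qq - qq⁻¹) * uu / (qq * uu - qq⁻¹)) •
            ∑ i, ∑ j, (if i < j ∧ i ≠ j.rev then EE n i j ⊗ₖ EE n j i else 0)
        + ((uu - qq ^ (-2 : ℤ)) * (uu - xib n))⁻¹ •
            ∑ i, ∑ j, aent n i j • (EE n i.rev j.rev ⊗ₖ EE n i j) :=
  statement9_general n

end
end

section
/- Suppose L ∈ M_N(A) is such that L^{(k)} is invertible in M_k(A) for every k = 1,…,N, and let L = F·H·E with F lower unitriangular, E upper unitriangular, H = diag(h_1,…,h_N) with each h_i invertible, be its Gauss decomposition. Then h_1 = L_{11}, and for 2 ≤ i ≤ N one has the quasideterminant formula h_i = L_{ii} − r_i·(L^{(i−1)})^{-1}·c_i, where r_i = (L_{i,1},…,L_{i,i−1}) is a row vector and c_i = (L_{1,i},…,L_{i−1,i})ᵀ is a column vector; that is, h_i equals the (i,i)-th quasideterminant of L^{(i)}. -/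
open Matrix

/-!
STATEMENT 12: the quasideterminant formula for the diagonal entries of the Gauss
decomposition `L = F·H·E`: `h_1 = L_{11}` and
`h_i = L_{ii} − r_i·(L^{(i−1)})^{-1}·c_i` for `2 ≤ i ≤ N`
(stated uniformly: for `i = 1` the correction sum is empty).
Here `(L^{(k)})^{-1}` is the inverse of the leading principal `k×k` submatrix,
which exists by hypothesis (for `k = 0` the empty matrix is trivially invertible,
so the hypothesis is stated for all `k ≤ N`).
-/

/-- A lower unitriangular matrix over a ring acts injectively on vectors. -/
private lemma lower_cancel {A : Type*} [Ring A] {n : ℕ}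
    (M : Matrix (Fin n) (Fin n) A)
    (h1 : ∀ a, M a a = 1) (h0 : ∀ a b : Fin n, a < b → M a b = 0)
    {v w : Fin n → A} (hvw : M *ᵥ v = M *ᵥ w) : ∀ b, v b = w b := by
  suffices key : ∀ m : ℕ, ∀ b : Fin n, (b : ℕ) = m → v b = w b by
    intro b; exact key (b : ℕ) b rfl
  intro m
  induction m using Nat.strong_induction_on with
  | _ m ih =>
    intro b hb
    have hbeq := congrFun hvw b
    simp only [Matrix.mulVec, dotProduct] at hbeq
    rw [← Finset.add_sum_erase _ _ (Finset.mem_univ b),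
        ← Finset.add_sum_erase _ (fun a => M b a * w a) (Finset.mem_univ b)] at hbeq
    have hs : ∑ a ∈ Finset.univ.erase b, M b a * v a
        = ∑ a ∈ Finset.univ.erase b, M b a * w a := by
      refine Finset.sum_congr rfl fun a ha => ?_
      rcases lt_or_gt_of_ne (Finset.ne_of_mem_erase ha) with hlt | hgt
      · rw [ih (a : ℕ) (hb ▸ hlt) a rfl]
      · rw [h0 b a hgt, zero_mul, zero_mul]
    rw [hs, h1] at hbeq
    simpa using add_right_cancel hbeq

set_option maxRecDepth 10000 in
theorem statement12 {A : Type*} [Ring A] (N : ℕ)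
    (L F H E : Matrix (Fin N) (Fin N) A)
    (h : ∀ (k : ℕ) (hk : k ≤ N),
      IsUnit (L.submatrix (Fin.castLE hk) (Fin.castLE hk)))
    (hF1 : ∀ i, F i i = 1) (hF0 : ∀ i j : Fin N, i < j → F i j = 0)
    (hH0 : ∀ i j : Fin N, i ≠ j → H i j = 0) (hHu : ∀ i, IsUnit (H i i))
    (hE1 : ∀ i, E i i = 1) (hE0 : ∀ i j : Fin N, j < i → E i j = 0)
    (hL : L = F * H * E) :
    ∀ i : Fin N,
      H i i = L i i -
        ∑ a : Fin (i : ℕ), ∑ b : Fin (i : ℕ),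
          L i (Fin.castLE i.isLt.le a) *
            Units.val ((h (i : ℕ) i.isLt.le).unit⁻¹) a b *
            L (Fin.castLE i.isLt.le b) i := by
  intro i
  have hle : (i : ℕ) ≤ N := i.isLt.le
  set cst : Fin (i : ℕ) → Fin N := Fin.castLE hle with hcstdef
  have hcl : ∀ a : Fin (i : ℕ), cst a < i := fun a => by
    simpa [Fin.lt_def, hcstdef] using a.isLt
  have hclt : ∀ (a : Fin (i : ℕ)) (c : Fin N), (i : ℕ) ≤ (c : ℕ) → cst a < c := by
    intro a c hc
    simp only [Fin.lt_def, hcstdef, Fin.coe_castLE]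
    exact lt_of_lt_of_le a.isLt hc
  -- entries of L in terms of F, H, E
  have hFH : ∀ a c : Fin N, (F * H) a c = F a c * H c c := by
    intro a c
    rw [Matrix.mul_apply]
    exact Finset.sum_eq_single c (fun d _ hd => by rw [hH0 d c hd, mul_zero]) (by simp)
  have hLab : ∀ a b : Fin N, L a b = ∑ c, F a c * H c c * E c b := by
    intro a b
    rw [hL, Matrix.mul_apply]
    exact Finset.sum_congr rfl fun c _ => by rw [hFH]
  -- restriction of sums over `Fin N` to the first `i` indices
  have hres : ∀ (u : Fin N → A), (∀ c : Fin N, (i : ℕ) ≤ (c : ℕ) → u c = 0) →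
      ∑ c, u c = ∑ a : Fin (i : ℕ), u (cst a) := by
    intro u hu
    have hmap : ∑ a : Fin (i : ℕ), u (cst a)
        = ∑ c ∈ Finset.univ.map (Fin.castLEEmb hle), u c := by
      rw [Finset.sum_map]
      exact Finset.sum_congr rfl fun a _ => by rw [Fin.castLEEmb_apply]
    rw [hmap]
    symm
    apply Finset.sum_subset (Finset.subset_univ _)
    intro c _ hc
    apply hu
    by_contra hlt
    push_neg at hlt
    exact hc (Finset.mem_map.mpr ⟨⟨(c : ℕ), hlt⟩, Finset.mem_univ _, by
      simp [Fin.castLEEmb_apply, Fin.ext_iff]⟩)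
  set Minv : Matrix (Fin (i : ℕ)) (Fin (i : ℕ)) A :=
    Units.val ((h (i : ℕ) i.isLt.le).unit⁻¹) with hMinvdef
  set x : Fin (i : ℕ) → A := Minv *ᵥ (fun b => L (cst b) i) with hxdef
  have hxa : ∀ a : Fin (i : ℕ), x a = ∑ b, Minv a b * L (cst b) i := by
    intro a; rw [hxdef]; rfl
  -- L' *ᵥ x recovers the column vector
  have hLx : ∀ b : Fin (i : ℕ), ∑ a, L (cst b) (cst a) * x a = L (cst b) i := by
    have h2 : L.submatrix cst cst * Minv = 1 := Units.mul_inv ((h (i : ℕ) i.isLt.le).unit)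
    intro b
    calc ∑ a, L (cst b) (cst a) * x a
        = ∑ a, ∑ c, L (cst b) (cst a) * (Minv a c * L (cst c) i) := by
          exact Finset.sum_congr rfl fun a _ => by rw [hxa, Finset.mul_sum]
      _ = ∑ c, (∑ a, L (cst b) (cst a) * Minv a c) * L (cst c) i := by
          rw [Finset.sum_comm]
          refine Finset.sum_congr rfl fun c _ => ?_
          rw [Finset.sum_mul]
          exact Finset.sum_congr rfl fun a _ => (mul_assoc _ _ _).symm
      _ = ∑ c, (1 : Matrix (Fin (i : ℕ)) (Fin (i : ℕ)) A) b c * L (cst c) i := by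
          refine Finset.sum_congr rfl fun c _ => ?_
          have h4 := congrFun (congrFun h2 b) c
          rw [Matrix.mul_apply] at h4
          simp only [Matrix.submatrix_apply] at h4
          rw [h4]
      _ = L (cst b) i := by
          simp [Matrix.one_apply]
  -- restricted entry formulas
  have hL'entry : ∀ b e : Fin (i : ℕ), L (cst b) (cst e) =
      ∑ a : Fin (i : ℕ), F (cst b) (cst a) * H (cst a) (cst a) * E (cst a) (cst e) := by
    intro b e
    rw [hLab]
    exact hres _ (fun c hc => by rw [hF0 _ _ (hclt b c hc), zero_mul, zero_mul])
  have hLbi : ∀ b : Fin (i : ℕ), L (cst b) i =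
      ∑ a : Fin (i : ℕ), F (cst b) (cst a) * H (cst a) (cst a) * E (cst a) i := by
    intro b
    rw [hLab]
    exact hres _ (fun c hc => by rw [hF0 _ _ (hclt b c hc), zero_mul, zero_mul])
  -- key identity: E' *ᵥ x equals the E-column
  have key : ∀ c : Fin (i : ℕ), (∑ a, E (cst c) (cst a) * x a) = E (cst c) i := by
    have main := lower_cancel (F.submatrix cst cst)
      (fun a => hF1 _)
      (fun a b hab => hF0 _ _ hab)
      (v := fun a => H (cst a) (cst a) * ∑ e, E (cst a) (cst e) * x e)
      (w := fun a => H (cst a) (cst a) * E (cst a) i)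
      ?_
    · intro c
      exact (hHu (cst c)).mul_left_cancel (main c)
    · funext b
      simp only [Matrix.mulVec, dotProduct, Matrix.submatrix_apply]
      calc ∑ a, F (cst b) (cst a) * (H (cst a) (cst a) * ∑ e, E (cst a) (cst e) * x e)
          = ∑ a, ∑ e, F (cst b) (cst a) * H (cst a) (cst a) * E (cst a) (cst e) * x e := by
            refine Finset.sum_congr rfl fun a _ => ?_
            rw [Finset.mul_sum, Finset.mul_sum]
            exact Finset.sum_congr rfl fun e _ => by
              rw [mul_assoc, mul_assoc]
        _ = ∑ e, (∑ a, F (cst b) (cst a) * H (cst a) (cst a) * E (cst a) (cst e)) * x e := by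
            rw [Finset.sum_comm]
            exact Finset.sum_congr rfl fun e _ => by rw [Finset.sum_mul]
        _ = ∑ e, L (cst b) (cst e) * x e := by
            exact Finset.sum_congr rfl fun e _ => by rw [← hL'entry]
        _ = L (cst b) i := hLx b
        _ = ∑ a, F (cst b) (cst a) * (H (cst a) (cst a) * E (cst a) i) := by
            rw [hLbi]
            exact Finset.sum_congr rfl fun a _ => by rw [mul_assoc]
  -- rewrite the double sum
  have hsum : ∑ a : Fin (i : ℕ), ∑ b : Fin (i : ℕ),
      L i (cst a) * Minv a b * L (cst b) i
      = ∑ c : Fin N, F i c * H c c * (∑ a, E c (cst a) * x a) := by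
    calc ∑ a : Fin (i : ℕ), ∑ b : Fin (i : ℕ), L i (cst a) * Minv a b * L (cst b) i
        = ∑ a : Fin (i : ℕ), L i (cst a) * x a := by
          refine Finset.sum_congr rfl fun a _ => ?_
          rw [hxa, Finset.mul_sum]
          exact Finset.sum_congr rfl fun b _ => by rw [mul_assoc]
      _ = ∑ a : Fin (i : ℕ), ∑ c : Fin N, F i c * H c c * E c (cst a) * x a := by
          refine Finset.sum_congr rfl fun a _ => ?_
          rw [hLab, Finset.sum_mul]
      _ = ∑ c : Fin N, ∑ a : Fin (i : ℕ), F i c * H c c * (E c (cst a) * x a) := by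
          rw [Finset.sum_comm]
          exact Finset.sum_congr rfl (fun c _ => Finset.sum_congr rfl fun a _ => by
            rw [mul_assoc])
      _ = ∑ c : Fin N, F i c * H c c * (∑ a, E c (cst a) * x a) := by
          exact Finset.sum_congr rfl fun c _ => by rw [Finset.mul_sum]
  rw [hsum, hLab i i, ← Finset.sum_sub_distrib]
  have hterm : ∀ c : Fin N,
      F i c * H c c * E c i - F i c * H c c * (∑ a, E c (cst a) * x a)
      = if c = i then H i i else 0 := by
    intro c
    rcases lt_trichotomy c i with hlt | heq | hgt
    · have hci : (c : ℕ) < (i : ℕ) := hlt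
      have hc' : cst ⟨(c : ℕ), hci⟩ = c := by
        simp [hcstdef, Fin.ext_iff]
      rw [if_neg (ne_of_lt hlt)]
      have := key ⟨(c : ℕ), hci⟩
      rw [hc'] at this
      rw [this, sub_self]
    · subst heq
      rw [if_pos rfl, hF1, hE1]
      have hz : (∑ a, E c (cst a) * x a) = 0 := by
        refine Finset.sum_eq_zero fun a _ => ?_
        rw [hE0 c (cst a) (hcl a), zero_mul]
      rw [hz, mul_zero, sub_zero, one_mul, mul_one]
    · rw [if_neg (ne_of_gt hgt), hF0 i c hgt, zero_mul, zero_mul, zero_mul, sub_self]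
  rw [Finset.sum_congr rfl fun c _ => hterm c]
  simp
end

section
/- Suppose L ∈ M_N(A) is such that L^{(k)} is invertible in M_k(A) for every k = 1,…,N, and let L = F·H·E with F lower unitriangular, E upper unitriangular, H = diag(h_1,…,h_N) with each h_i invertible, be its Gauss decomposition. Then for all 1 ≤ i < j ≤ N: h_i·E_{ij} = L_{ij} − r_i·(L^{(i−1)})^{-1}·c_j^{(i)} and F_{ji}·h_i = L_{ji} − r_j^{(i)}·(L^{(i−1)})^{-1}·c_i, where r_i = (L_{i,1},…,L_{i,i−1}), c_j^{(i)} = (L_{1,j},…,L_{i−1,j})ᵀ, r_j^{(i)} = (L_{j,1},…,L_{j,i−1}), c_i = (L_{1,i},…,L_{i−1,i})ᵀ; for i = 1 the correction terms are absent, i.e., E_{1j} = L_{11}^{-1}·L_{1j} and F_{j1} = L_{j1}·L_{11}^{-1}. -/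
open Matrix Finset

section aux
variable {A : Type*} [Ring A]

lemma sum_restrict {N n : ℕ} (hn : n ≤ N) (f : Fin N → A)
    (hf : ∀ k : Fin N, n ≤ (k : ℕ) → f k = 0) :
    ∑ k : Fin N, f k = ∑ m : Fin n, f (Fin.castLE hn m) := by
  classical
  set g : ℕ → A := fun j => if h : j < N then f ⟨j, h⟩ else 0 with hg
  have h1 : ∑ k : Fin N, f k = ∑ k ∈ Finset.range N, g k := by
    rw [← Fin.sum_univ_eq_sum_range]
    exact Finset.sum_congr rfl fun k _ => by simp [hg, k.isLt]
  have h2 : ∑ m : Fin n, f (Fin.castLE hn m) = ∑ k ∈ Finset.range n, g k := by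
    rw [← Fin.sum_univ_eq_sum_range]
    refine Finset.sum_congr rfl fun m _ => ?_
    have : (m : ℕ) < N := lt_of_lt_of_le m.isLt hn
    simp [hg, this]
    rfl
  rw [h1, h2]
  refine (Finset.sum_subset (Finset.range_subset_range.mpr hn) fun x hx hnx => ?_).symm
  have hxN : x < N := Finset.mem_range.mp hx
  have hxn : n ≤ x := le_of_not_gt (fun hc => hnx (Finset.mem_range.mpr hc))
  simp only [hg, dif_pos hxN]
  exact hf ⟨x, hxN⟩ hxn

lemma strictLower_pow {n : ℕ} (M : Matrix (Fin n) (Fin n) A)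
    (hM : ∀ a b : Fin n, (a : ℕ) ≤ (b : ℕ) → M a b = 0) :
    ∀ m : ℕ, ∀ a b : Fin n, (a : ℕ) < (b : ℕ) + m → (M ^ m) a b = 0 := by
  intro m
  induction m with
  | zero =>
    intro a b hab
    have : a ≠ b := by intro hc; subst hc; omega
    simp [Matrix.one_apply, this]
  | succ m ih =>
    intro a b hab
    rw [pow_succ, Matrix.mul_apply]
    refine Finset.sum_eq_zero fun k _ => ?_
    by_cases hk : (a : ℕ) < (k : ℕ) + m
    · rw [ih a k hk, zero_mul]
    · have : (k : ℕ) ≤ (b : ℕ) := by omega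
      rw [hM k b this, mul_zero]

lemma strictLower_nilpotent {n : ℕ} (M : Matrix (Fin n) (Fin n) A)
    (hM : ∀ a b : Fin n, (a : ℕ) ≤ (b : ℕ) → M a b = 0) :
    IsNilpotent M := by
  refine ⟨n, ?_⟩
  ext a b
  rw [strictLower_pow M hM n a b (by omega)]
  simp

lemma lowerUni_isUnit {n : ℕ} (M : Matrix (Fin n) (Fin n) A)
    (h1 : ∀ a, M a a = 1) (h0 : ∀ a b : Fin n, (a : ℕ) < (b : ℕ) → M a b = 0) :
    IsUnit M := by
  have : M = (M - 1) + 1 := (sub_add_cancel _ _).symm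
  rw [this]
  refine IsNilpotent.isUnit_add_one (strictLower_nilpotent _ fun a b hab => ?_)
  rcases eq_or_lt_of_le hab with hc | hc
  · have : a = b := Fin.ext hc
    subst this
    simp [h1 a]
  · simp [Matrix.one_apply, h0 a b hc, Fin.ne_of_val_ne (Nat.ne_of_lt hc)]

end aux

theorem statement13 {A : Type*} [Ring A] (N : ℕ)
    (L F H E : Matrix (Fin N) (Fin N) A)
    (h : ∀ (k : ℕ) (hk : k ≤ N),
      IsUnit (L.submatrix (Fin.castLE hk) (Fin.castLE hk)))
    (hF1 : ∀ i, F i i = 1) (hF0 : ∀ i j : Fin N, i < j → F i j = 0)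
    (hH0 : ∀ i j : Fin N, i ≠ j → H i j = 0) (hHu : ∀ i, IsUnit (H i i))
    (hE1 : ∀ i, E i i = 1) (hE0 : ∀ i j : Fin N, j < i → E i j = 0)
    (hL : L = F * H * E) :
    ∀ i j : Fin N, i < j →
      (H i i * E i j = L i j -
          ∑ a : Fin (i : ℕ), ∑ b : Fin (i : ℕ),
            L i (Fin.castLE i.isLt.le a) *
              Units.val ((h (i : ℕ) i.isLt.le).unit⁻¹) a b *
              L (Fin.castLE i.isLt.le b) j) ∧
      (F j i * H i i = L j i -
          ∑ a : Fin (i : ℕ), ∑ b : Fin (i : ℕ),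
            L j (Fin.castLE i.isLt.le a) *
              Units.val ((h (i : ℕ) i.isLt.le).unit⁻¹) a b *
              L (Fin.castLE i.isLt.le b) i) := by
  intro i j hij
  classical
  -- pointwise formula for L
  have hL3 : ∀ a b : Fin N, L a b = ∑ k : Fin N, F a k * H k k * E k b := by
    intro a b
    rw [hL, Matrix.mul_apply]
    refine Finset.sum_congr rfl fun k _ => ?_
    rw [Matrix.mul_apply]
    rw [Finset.sum_eq_single k (fun l _ hl => by rw [hH0 l k hl, mul_zero]) (by simp)]
  set n : ℕ := (i : ℕ) with hn
  have hnN : n ≤ N := i.isLt.le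
  set emb : Fin n → Fin N := Fin.castLE hnN with hemb
  have hembi : ∀ m : Fin n, emb m < i := fun m => m.isLt
  set X : Matrix (Fin n) (Fin n) A := Units.val ((h n hnN).unit⁻¹) with hX
  set Lm : Matrix (Fin n) (Fin n) A := L.submatrix emb emb with hLm
  have hXL : X * Lm = 1 := by
    have := (h n hnN).unit.inv_mul
    rwa [IsUnit.unit_spec] at this
  have hLX : Lm * X = 1 := by
    have := (h n hnN).unit.mul_inv
    rwa [IsUnit.unit_spec] at this
  set d : Fin N → A := fun k => H k k with hd
  set Fm : Matrix (Fin n) (Fin n) A := F.submatrix emb emb with hFm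
  set Em : Matrix (Fin n) (Fin n) A := E.submatrix emb emb with hEm
  set Hm : Matrix (Fin n) (Fin n) A := Matrix.diagonal (fun m => d (emb m)) with hHm
  have hembmono : ∀ a b : Fin n, (a : ℕ) < (b : ℕ) → emb a < emb b := fun a b hab => hab
  have hLmdec : Lm = Fm * Hm * Em := by
    ext a b
    rw [Matrix.mul_apply]
    have hstep : ∀ k, (Fm * Hm) a k = Fm a k * d (emb k) := fun k => by
      rw [hHm, Matrix.mul_diagonal]
    simp_rw [hstep]
    rw [hLm, Matrix.submatrix_apply, hL3]
    rw [sum_restrict hnN _ (fun k hk => ?_)]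
    · rfl
    · have hak : emb a < k := by
        have := hembi a
        simp only [Fin.lt_def] at *
        omega
      rw [hF0 _ _ hak, zero_mul, zero_mul]
  have hFmu : IsUnit Fm :=
    lowerUni_isUnit Fm (fun a => hF1 _) (fun a b hab => hF0 _ _ (hembmono a b hab))
  set Hi : Matrix (Fin n) (Fin n) A :=
    Matrix.diagonal (fun m => (((hHu (emb m)).unit⁻¹ : Aˣ) : A)) with hHi
  have hHiH : Hi * Hm = 1 := by
    rw [hHi, hHm, Matrix.diagonal_mul_diagonal]
    have : ∀ m : Fin n, (((hHu (emb m)).unit⁻¹ : Aˣ) : A) * d (emb m) = 1 :=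
      fun m => (hHu (emb m)).val_inv_mul
    simp only [this]
    simp [Matrix.diagonal_one]
  have hcan : Fm * (Hm * Em * X * Fm) = Fm * 1 := by
    rw [mul_one]
    simp only [← mul_assoc]
    rw [← hLmdec, hLX, one_mul]
  have h2 : Hm * (Em * X * Fm) = 1 := by
    have := hFmu.mul_left_cancel hcan
    simp only [← mul_assoc]

    exact this
  have hEXF : Em * X * Fm = Hi := by
    calc Em * X * Fm = 1 * (Em * X * Fm) := (one_mul _).symm
    _ = Hi * Hm * (Em * X * Fm) := by rw [hHiH]
    _ = Hi * (Hm * (Em * X * Fm)) := by rw [mul_assoc]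
    _ = Hi := by rw [h2, mul_one]
  have key : ∀ p q : Fin N,
      (∑ a : Fin n, ∑ b : Fin n, L p (emb a) * X a b * L (emb b) q)
        = ∑ m : Fin n, F p (emb m) * d (emb m) * E (emb m) q := by
    intro p q
    set v : Fin n → A := fun m => F p (emb m) * d (emb m) with hv
    set w : Fin n → A := fun m => d (emb m) * E (emb m) q with hw
    have hr : ∀ a : Fin n, L p (emb a) = (v ᵥ* Em) a := by
      intro a
      rw [hL3, Matrix.vecMul, dotProduct]
      rw [sum_restrict hnN _ (fun k hk => ?_)]
      · rfl
      · have hak : emb a < k := by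
          have := hembi a
          simp only [Fin.lt_def] at *
          omega
        rw [hE0 _ _ hak, mul_zero]
    have hc : ∀ b : Fin n, L (emb b) q = (Fm *ᵥ w) b := by
      intro b
      rw [hL3, Matrix.mulVec, dotProduct]
      rw [sum_restrict hnN _ (fun k hk => ?_)]
      · refine Finset.sum_congr rfl fun m _ => ?_
        rw [mul_assoc]
        rfl
      · have hbk : emb b < k := by
          have := hembi b
          simp only [Fin.lt_def] at *
          omega
        rw [hF0 _ _ hbk, zero_mul, zero_mul]
    calc (∑ a : Fin n, ∑ b : Fin n, L p (emb a) * X a b * L (emb b) q)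
        = ((v ᵥ* Em) ᵥ* X) ⬝ᵥ (Fm *ᵥ w) := by
          simp_rw [hr, hc]
          rw [dotProduct, Finset.sum_comm]
          refine Finset.sum_congr rfl fun b _ => ?_
          rw [Matrix.vecMul, dotProduct, Finset.sum_mul]
      _ = (v ᵥ* (Em * X * Fm)) ⬝ᵥ w := by
          rw [Matrix.vecMul_vecMul, Matrix.dotProduct_mulVec, Matrix.vecMul_vecMul]
      _ = ∑ m : Fin n, v m * (((hHu (emb m)).unit⁻¹ : Aˣ) : A) * w m := by
          rw [hEXF, hHi, dotProduct]
          refine Finset.sum_congr rfl fun m _ => ?_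
          rw [Matrix.vecMul_diagonal]
      _ = ∑ m : Fin n, F p (emb m) * d (emb m) * E (emb m) q := by
          refine Finset.sum_congr rfl fun m _ => ?_
          rw [hv, hw]
          dsimp only
          rw [mul_assoc (F p (emb m) * d (emb m)),
            ← mul_assoc (((hHu (emb m)).unit⁻¹ : Aˣ) : A), (hHu (emb m)).val_inv_mul,
            one_mul]
  have hn1 : n + 1 ≤ N := i.isLt
  have hcast1 : ∀ m : Fin n, Fin.castLE hn1 (Fin.castSucc m) = emb m := fun m => Fin.ext rfl
  have hcast2 : Fin.castLE hn1 (Fin.last n) = i := Fin.ext rfl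
  constructor
  · have hexp : L i j
        = (∑ m : Fin n, F i (emb m) * d (emb m) * E (emb m) j) + H i i * E i j := by
      rw [hL3 i j]
      rw [sum_restrict hn1 _ (fun k hk => ?_)]
      · rw [Fin.sum_univ_castSucc]
        simp only [hcast1, hcast2]
        rw [hF1, one_mul]
      · have : i < k := by
          simp only [Fin.lt_def] at *
          omega
        rw [hF0 _ _ this, zero_mul, zero_mul]
    rw [key i j, hexp, add_sub_cancel_left]
  · have hexp : L j i
        = (∑ m : Fin n, F j (emb m) * d (emb m) * E (emb m) i) + F j i * H i i := by
      rw [hL3 j i]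
      rw [sum_restrict hn1 _ (fun k hk => ?_)]
      · rw [Fin.sum_univ_castSucc]
        simp only [hcast1, hcast2]
        rw [hE1, mul_one]
      · have : i < k := by
          simp only [Fin.lt_def] at *
          omega
        rw [hE0 _ _ this, mul_zero]
    rw [key j i, hexp, add_sub_cancel_left]
end
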